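/- Weak Kőnig's lemma implies the fan theorem: if every infinite decidable binary tree has an infinite path, then every well-founded decidable binary tree is bounded. -/
import Mathlib

def IsTree (τ : List Bool → Prop) : Prop :=
  (∃ f : List Bool → Bool, ∀ u, τ u ↔ f u = true) ∧
  (∃ u, τ u) ∧
  (∀ u₁ u₂, τ u₂ → u₁ <+: u₂ → τ u₁)

theorem WKL_to_FAN
    (WKL : ∀ τ : List Bool → Prop, IsTree τ →
      (∀ n, ∃ u, u.length ≥ n ∧ τ u) →
      ∃ f : ℕ → Bool, ∀ n, τ ((List.range (n + 1)).map f)) :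
    ∀ τ : List Bool → Prop, IsTree τ →
      (∀ f : ℕ → Bool, ∃ n, ¬ τ ((List.range (n + 1)).map f)) →
      ∃ n, ∀ u, u.length ≥ n → ¬ τ u := by
  intro τ hτ hwf
  by_contra h
  push_neg at h
  obtain ⟨f, hf⟩ := WKL τ hτ h
  obtain ⟨n, hn⟩ := hwf f
  exact hn (hf n)
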